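/- Assume the functions x ↦ Δ(x) e^{−H(x)} and x ↦ Δ(x) e^{−H(ψ(x))} are integrable. Then 2 ∫_{ℝ^m×ℝ^m} Δ(x) e^{−H(x)} dx = ∫_{ℝ^m×ℝ^m} Δ(x) (1 − e^{−Δ(x)}) e^{−H(x)} dx. -/
import Mathlib


open MeasureTheory

/-- identity (5.2)/(2.9) of the paper, `eqn:muhfin`.
For a measurable, volume-preserving, time-reversible bijection `ψ` of phase space
`ℝ^m × ℝ^m`, with energy increment `Δ(x) = H(ψ x) - H x`, if `Δ e^{-H}` and
`Δ e^{-H∘ψ}` are integrable, then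
`2 ∫ Δ(x) e^{-H(x)} dx = ∫ Δ(x) (1 - e^{-Δ(x)}) e^{-H(x)} dx`. -/
theorem stmt_2 (m : ℕ) (hm : 0 < m)
    (H : ((Fin m → ℝ) × (Fin m → ℝ)) → ℝ) (hHmeas : Measurable H)
    (hHS : ∀ x : (Fin m → ℝ) × (Fin m → ℝ), H (x.1, -x.2) = H x)
    (hHint : Integrable (fun x : (Fin m → ℝ) × (Fin m → ℝ) => Real.exp (-H x)))
    (ψ : ((Fin m → ℝ) × (Fin m → ℝ)) ≃ ((Fin m → ℝ) × (Fin m → ℝ)))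
    (hψmeas : Measurable ψ)
    (hψvol : MeasurePreserving ψ volume volume)
    (hψrev : ∀ x : (Fin m → ℝ) × (Fin m → ℝ),
      ((ψ.symm (x.1, -x.2)).1, -(ψ.symm (x.1, -x.2)).2) = ψ x)
    (hint1 : Integrable (fun x => (H (ψ x) - H x) * Real.exp (-H x)))
    (hint2 : Integrable (fun x => (H (ψ x) - H x) * Real.exp (-H (ψ x)))) :
    2 * ∫ x, (H (ψ x) - H x) * Real.exp (-H x) =
      ∫ x, (H (ψ x) - H x) * (1 - Real.exp (-(H (ψ x) - H x))) * Real.exp (-H x) := by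
  have hsymm_eq : ∀ y : (Fin m → ℝ) × (Fin m → ℝ),
      ψ.symm y = ((ψ (y.1, -y.2)).1, -(ψ (y.1, -y.2)).2) := by
    intro y
    have h := hψrev (y.1, -y.2)
    simp only [neg_neg, Prod.mk.eta] at h
    rw [Prod.ext_iff] at h
    simp only at h
    exact Prod.ext_iff.mpr ⟨h.1, neg_eq_iff_eq_neg.mp h.2⟩
  have hψsymm_meas : Measurable (ψ.symm : ((Fin m → ℝ) × (Fin m → ℝ)) → _) := by
    have heq : (ψ.symm : ((Fin m → ℝ) × (Fin m → ℝ)) → _)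
        = fun y => ((ψ (y.1, -y.2)).1, -(ψ (y.1, -y.2)).2) := funext hsymm_eq
    rw [heq]
    have hc : Measurable fun y : (Fin m → ℝ) × (Fin m → ℝ) => ψ (y.1, -y.2) :=
      hψmeas.comp (measurable_fst.prodMk measurable_snd.neg)
    exact hc.fst.prodMk hc.snd.neg
  let ψ' : ((Fin m → ℝ) × (Fin m → ℝ)) ≃ᵐ ((Fin m → ℝ) × (Fin m → ℝ)) :=
    ⟨ψ, hψmeas, hψsymm_meas⟩
  let S : ((Fin m → ℝ) × (Fin m → ℝ)) ≃ᵐ ((Fin m → ℝ) × (Fin m → ℝ)) :=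
    (MeasurableEquiv.refl _).prodCongr (Homeomorph.neg (Fin m → ℝ)).toMeasurableEquiv
  have hSvol : MeasurePreserving (S : _ → ((Fin m → ℝ) × (Fin m → ℝ))) volume volume :=
    (MeasurePreserving.id _).prod (Measure.measurePreserving_neg _)
  have hSapp : ∀ y : (Fin m → ℝ) × (Fin m → ℝ), S y = (y.1, -y.2) := fun y => rfl
  have key : ∫ x, (H (ψ x) - H x) * Real.exp (-H (ψ x)) =
      - ∫ x, (H (ψ x) - H x) * Real.exp (-H x) := by
    have step1 : ∫ x, (H (ψ x) - H x) * Real.exp (-H (ψ x)) =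
        ∫ y, (H y - H (ψ.symm y)) * Real.exp (-H y) := by
      have h := hψvol.integral_comp ψ'.measurableEmbedding
        (fun y => (H y - H (ψ.symm y)) * Real.exp (-H y))
      simp only [show (⇑ψ' : _ → _) = ⇑ψ from rfl, Equiv.symm_apply_apply] at h
      exact h
    have step2 : ∫ y, (H y - H (ψ.symm y)) * Real.exp (-H y) =
        ∫ y, (H (S y) - H (ψ.symm (S y))) * Real.exp (-H (S y)) := by
      rw [hSvol.integral_comp S.measurableEmbedding
        (fun y => (H y - H (ψ.symm y)) * Real.exp (-H y))]
    rw [step1, step2, ← integral_neg]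
    congr 1
    funext y
    have h1 : ψ.symm (y.1, -y.2) = ((ψ y).1, -(ψ y).2) := by
      rw [hsymm_eq (y.1, -y.2)]
      simp
    simp only [hSapp, h1, hHS y, hHS (ψ y)]
    ring
  have hrw : (fun x => (H (ψ x) - H x) * (1 - Real.exp (-(H (ψ x) - H x))) * Real.exp (-H x))
      = fun x => (H (ψ x) - H x) * Real.exp (-H x)
        - (H (ψ x) - H x) * Real.exp (-H (ψ x)) := by
    funext x
    have hexp : Real.exp (-(H (ψ x) - H x)) * Real.exp (-H x) = Real.exp (-H (ψ x)) := by
      rw [← Real.exp_add]; ring_nf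
    linear_combination (-(H (ψ x) - H x)) * hexp
  rw [hrw, integral_sub hint1 hint2, key]
  ring
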